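/- arXiv:1608.08989 — 3 statements merged into one kernel-verified Lean document; each statement's English description precedes it below -/
import Mathlib

section
/- Let 2 ≤ s ≤ m and let x₁,…,x_{s−1} and a₁,…,a_s be integers from the set {1,…,m}. Then Σ_σ sgn(σ) ∏_{t=1}^{s} D⁺(x₁,…,x_{t−1},σ(a)_t) = D⁺(a₁,…,a_s) · ∏_{t=1}^{s−1} D⁺(x₁,…,x_t), where the sum runs over all permutations σ of the tuple (a₁,…,a_s) and σ(a)_t denotes the t-th entry of the permuted tuple (for t = 1 the factor is D⁺(σ(a)_1) = c_{1,σ(a)_1}). -/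
/-!
Write `y_t` for a tuple of length `t`, here `(x₁,…,x_t)`. Expanding `D⁺(y_t, j)` along its last
column gives `Σ_{u ≤ t} κ_{t,u} c_{u+1,j}` with cofactors `κ_{t,u}` independent of `j` and
`κ_{t,t} = D⁺(y_t)`. So the matrix `(D⁺(y_t, a_j))_{t,j}`, whose determinant is the left-hand
side, is `K * C` with `K` lower triangular and `C = (c_{u+1,a_j})`, and its determinant is
`D⁺(a) · ∏_t D⁺(y_t)`.
-/

noncomputable section

/-- `Dplus c l` : the determinant `D⁺(l)` of the matrix with rows `1,…,l.length` and
columns given by the list `l`, whose `(u,t)`-entry is `c u (l.get t)`. -/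
def Dplus {R : Type*} [CommRing R] (c : ℕ → ℕ → R) (l : List ℕ) : R :=
  (Matrix.of fun u t : Fin l.length => c (u.1 + 1) (l.get t)).det

section

variable {R : Type*} [CommRing R] (c : ℕ → ℕ → R)

theorem Dplus_eq_det_of_length_eq {l : List ℕ} {n : ℕ} (h : l.length = n) :
    Dplus c l = (Matrix.of fun u t : Fin n => c (u.1 + 1) (l[t.1]'(h ▸ t.2))).det := by
  subst h
  rfl

@[simp]
theorem Dplus_nil : Dplus c [] = 1 :=
  Matrix.det_fin_zero

theorem Dplus_ofFn {n : ℕ} (f : Fin n → ℕ) :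
    Dplus c (List.ofFn f) = (Matrix.of fun u t : Fin n => c (u.1 + 1) (f t)).det := by
  rw [Dplus_eq_det_of_length_eq c (List.length_ofFn)]
  simp

/-- The cofactor of the entry `c (u + 1) j` of `D⁺(l ++ [j])`. -/
def lastColumnCofactor (l : List ℕ) (u : ℕ) : R :=
  if h : u ≤ l.length then
    (-1) ^ (u + l.length) * (Matrix.of fun v w : Fin l.length =>
      c ((Fin.succAbove ⟨u, Nat.lt_succ_of_le h⟩ v).1 + 1) (l.get w)).det
  else 0

theorem lastColumnCofactor_of_length_lt {l : List ℕ} {u : ℕ} (h : l.length < u) :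
    lastColumnCofactor c l u = 0 :=
  dif_neg (by omega)

theorem lastColumnCofactor_length (l : List ℕ) : lastColumnCofactor c l l.length = Dplus c l := by
  rw [lastColumnCofactor, dif_pos le_rfl, ← two_mul, pow_mul, neg_one_sq, one_pow, one_mul]
  congr 2
  ext v w
  simp [Fin.succAbove_of_castSucc_lt, Fin.castSucc_lt_iff_succ_le, Fin.le_def]

theorem Dplus_append_singleton (l : List ℕ) (j : ℕ) :
    Dplus c (l ++ [j]) =
      ∑ u ∈ Finset.range (l.length + 1), lastColumnCofactor c l u * c (u + 1) j := by
  rw [Dplus_eq_det_of_length_eq c (n := l.length + 1) (by simp),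
    Matrix.det_succ_column _ (Fin.last _), ← Fin.sum_univ_eq_sum_range]
  refine Finset.sum_congr rfl fun u _ => ?_
  simp only [lastColumnCofactor, Fin.val_last, Fin.is_le, dif_pos, Fin.eta]
  rw [mul_right_comm]
  congr 3
  · ext v w
    simp [List.getElem_append_left]
  · simp

theorem Dplus_append_singleton_eq_sum_fin {s : ℕ} {l : List ℕ} (hl : l.length < s) (j : ℕ) :
    Dplus c (l ++ [j]) = ∑ u : Fin s, lastColumnCofactor c l u * c (u + 1) j := by
  rw [Dplus_append_singleton,
    Fin.sum_univ_eq_sum_range (fun u => lastColumnCofactor c l u * c (u + 1) j)]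
  exact Finset.sum_subset (Finset.range_subset_range.2 hl) fun u _ hu => by
    rw [lastColumnCofactor_of_length_lt c (by simpa using hu), zero_mul]

theorem sum_sign_smul_prod_Dplus_append {s : ℕ} (y : Fin s → List ℕ)
    (hy : ∀ t, (y t).length = t) (a : Fin s → ℕ) :
    ∑ σ : Equiv.Perm (Fin s), (Equiv.Perm.sign σ : ℤ) • ∏ t, Dplus c (y t ++ [a (σ t)])
      = Dplus c (List.ofFn a) * ∏ t, Dplus c (y t) := by
  set L : Matrix (Fin s) (Fin s) R := .of fun t u => lastColumnCofactor c (y t) u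
  set C : Matrix (Fin s) (Fin s) R := .of fun u j => c (u.1 + 1) (a j)
  have hL : L.IsLowerTriangular := fun t u htu =>
    lastColumnCofactor_of_length_lt c (hy t ▸ htu)
  have hLC : (L * C).transpose.det = ∑ σ : Equiv.Perm (Fin s), (Equiv.Perm.sign σ : ℤ) •
      ∏ t, Dplus c (y t ++ [a (σ t)]) := by
    rw [Matrix.det_apply]
    refine Finset.sum_congr rfl fun σ _ => ?_
    rw [Units.smul_def]
    congr 1
    refine Finset.prod_congr rfl fun t _ => ?_
    rw [Dplus_append_singleton_eq_sum_fin c (hy t ▸ t.2)]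
    rfl
  rw [← hLC, Matrix.det_transpose, Matrix.det_mul, Matrix.det_of_isLowerTriangular L hL, mul_comm,
    Dplus_ofFn]
  congr 1
  refine Finset.prod_congr rfl fun t _ => ?_
  change lastColumnCofactor c (y t) t = _
  rw [← hy t, lastColumnCofactor_length]

end

theorem statement5_general {R : Type*} [CommRing R] (c : ℕ → ℕ → R) (s : ℕ)
    (x : Fin (s - 1) → ℕ) (a : Fin s → ℕ) :
    ∑ σ : Equiv.Perm (Fin s), (Equiv.Perm.sign σ : ℤ) •
        ∏ t : Fin s, Dplus c ((List.ofFn x).take t.1 ++ [a (σ t)])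
      = Dplus c (List.ofFn a) * ∏ t ∈ Finset.Icc 1 (s - 1), Dplus c ((List.ofFn x).take t) := by
  have hlength (t : Fin s) : ((List.ofFn x).take t).length = t := by
    simp only [List.length_take, List.length_ofFn]
    omega
  have hprod : ∏ t ∈ Finset.Icc 1 (s - 1), Dplus c ((List.ofFn x).take t)
      = ∏ t ∈ Finset.range s, Dplus c ((List.ofFn x).take t) :=
    Finset.prod_subset
      (fun t ht => by simp only [Finset.mem_Icc, Finset.mem_range] at ht ⊢; omega)
      fun t hts ht => by
        obtain rfl : t = 0 := by simp only [Finset.mem_Icc, Finset.mem_range] at hts ht; omega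
        simp
  rw [sum_sign_smul_prod_Dplus_append c _ hlength, hprod,
    Fin.prod_univ_eq_prod_range (fun t => Dplus c ((List.ofFn x).take t))]

/-- `Σ_σ sgn(σ) ∏_{t=1}^{s} D⁺(x₁,…,x_{t−1},σ(a)_t)
  = D⁺(a₁,…,a_s) · ∏_{t=1}^{s−1} D⁺(x₁,…,x_t)`,
the sum over all permutations of the tuple `(a₁,…,a_s)`. -/
theorem statement5 {R : Type*} [CommRing R] (c : ℕ → ℕ → R) (m s : ℕ)
    (hs : 2 ≤ s) (hsm : s ≤ m)
    (x : Fin (s - 1) → ℕ) (a : Fin s → ℕ)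
    (hx : ∀ t, 1 ≤ x t ∧ x t ≤ m) (ha : ∀ t, 1 ≤ a t ∧ a t ≤ m) :
    ∑ σ : Equiv.Perm (Fin s), (Equiv.Perm.sign σ : ℤ) •
        ∏ t : Fin s, Dplus c ((List.ofFn x).take t.1 ++ [a (σ t)])
      = Dplus c (List.ofFn a) * ∏ t ∈ Finset.Icc 1 (s - 1), Dplus c ((List.ofFn x).take t) :=
  statement5_general c s x a
end
end

section
/- Let 2 ≤ s ≤ n and let x₁,…,x_{s−1} and a₁,…,a_s be integers from the set {m+1,…,m+n}. Then Σ_{t=1}^{s} (−1)^{s−t} D⁻(x₁,…,x_{s−1},a_t) · D⁻(a₁,…,⟨a_t⟩,…,a_s) = D⁻(x₁,…,x_{s−1}) · D⁻(a₁,…,a_s). -/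
/-!
Let `A` be the matrix of the columns `a₁,…,a_s` and `N` that of `x₁,…,x_{s-1}` completed by an
arbitrary last column. The signed minor `(-1)^{s-t} D⁻(a₁,…,⟨a_t⟩,…,a_s)` is the cofactor
`adj(A)_{t,s}`, and `D⁻(x₁,…,x_{s-1},a_t)` is `det N` with its last column replaced by column `t`
of `A`, which by Cramer's rule is `(adj(N) A)_{s,t}`. The sum is therefore
`(adj(N) A adj(A))_{s,s} = det A · adj(N)_{s,s} = D⁻(a₁,…,a_s) · D⁻(x₁,…,x_{s-1})`.
-/

noncomputable section

/-- `Dminus c m l` : the determinant `D⁻(l)` of the matrix with rows `m+1,…,m+l.length`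
and columns given by the list `l`, whose `(u,v)`-entry is `c (m+u) (l.get v)`. -/
def Dminus {R : Type*} [CommRing R] (c : ℕ → ℕ → R) (m : ℕ) (l : List ℕ) : R :=
  (Matrix.of fun u v : Fin l.length => c (m + u.1 + 1) (l.get v)).det

theorem List.eraseIdx_ofFn {α : Type*} {k : ℕ} (f : Fin (k + 1) → α) (t : Fin (k + 1)) :
    (List.ofFn f).eraseIdx t = List.ofFn (f ∘ t.succAbove) := by
  refine List.ext_getElem (by simp [List.length_eraseIdx, t.is_le]) fun i hi _ => ?_
  rw [List.getElem_eraseIdx, List.getElem_ofFn, List.getElem_ofFn]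
  split_ifs with h
  · simp [Fin.succAbove_of_castSucc_lt t ⟨i, _⟩ (Fin.lt_def.2 h)]
  · simp [Fin.succAbove_of_le_castSucc t ⟨i, _⟩ (Fin.le_def.2 (not_lt.1 h))]

theorem List.ofFn_append_singleton {α : Type*} {k : ℕ} (f : Fin k → α) (y : α) :
    List.ofFn f ++ [y] = List.ofFn (Fin.snoc f y) := by
  rw [List.ofFn_succ_last]
  simp

section

variable {R : Type*}

def dminusMatrix (c : ℕ → ℕ → R) (m : ℕ) {k : ℕ} (f : Fin k → ℕ) : Matrix (Fin k) (Fin k) R :=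
  Matrix.of fun u v => c (m + u + 1) (f v)

theorem dminusMatrix_update (c : ℕ → ℕ → R) (m : ℕ) {k : ℕ} (f : Fin k → ℕ) (j : Fin k) (y : ℕ) :
    dminusMatrix c m (Function.update f j y) =
      (dminusMatrix c m f).updateCol j fun u => c (m + u + 1) y := by
  ext u v
  by_cases h : v = j <;> simp [dminusMatrix, Function.update_apply, h]

variable [CommRing R]

theorem Dminus_ofFn (c : ℕ → ℕ → R) (m : ℕ) {k : ℕ} (f : Fin k → ℕ) :
    Dminus c m (List.ofFn f) = (dminusMatrix c m f).det := by
  rw [Dminus, ← Matrix.det_submatrix_equiv_self (finCongr (List.length_ofFn (f := f))).symm]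
  congr 1
  ext u v
  simp [dminusMatrix]

theorem Matrix.det_updateCol_eq_adjugate_mul_apply {n : Type*} [Fintype n] [DecidableEq n]
    (N A : Matrix n n R) (j t : n) :
    (N.updateCol j fun u => A u t).det = (N.adjugate * A) j t := by
  rw [← Matrix.cramer_apply, Matrix.cramer_eq_adjugate_mulVec, Matrix.mul_apply, Matrix.mulVec,
    dotProduct]

theorem Matrix.sum_adjugate_mul_det_updateCol {n : Type*} [Fintype n] [DecidableEq n]
    (N A : Matrix n n R) (i j : n) :
    ∑ t, A.adjugate t i * (N.updateCol j fun u => A u t).det = A.det * N.adjugate j i := by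
  simp_rw [Matrix.det_updateCol_eq_adjugate_mul_apply, mul_comm (A.adjugate _ i)]
  rw [← Matrix.mul_apply, Matrix.mul_assoc, Matrix.mul_adjugate, Matrix.mul_smul, Matrix.mul_one,
    Matrix.smul_apply, smul_eq_mul]

theorem Matrix.adjugate_apply_last {k : ℕ} (A : Matrix (Fin (k + 1)) (Fin (k + 1)) R)
    (t : Fin (k + 1)) :
    A.adjugate t (Fin.last k) = (-1) ^ (k - t) * (A.submatrix Fin.castSucc t.succAbove).det := by
  have hsign : (-1 : R) ^ (k + t) = (-1) ^ (k - t) := by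
    rw [show k + t = k - t + 2 * t by omega, pow_add, pow_mul, neg_one_sq, one_pow, mul_one]
  rw [Matrix.adjugate_fin_succ_eq_det_submatrix, Fin.succAbove_last, Fin.val_last, hsign]

theorem Matrix.adjugate_last_last {k : ℕ} (A : Matrix (Fin (k + 1)) (Fin (k + 1)) R) :
    A.adjugate (Fin.last k) (Fin.last k) = (A.submatrix Fin.castSucc Fin.castSucc).det := by
  rw [Matrix.adjugate_apply_last, Fin.val_last, Nat.sub_self, pow_zero, one_mul, Fin.succAbove_last]

theorem sum_neg_one_pow_mul_Dminus_mul_Dminus (c : ℕ → ℕ → R) (m : ℕ) {r : ℕ}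
    (x : Fin r → ℕ) (a : Fin (r + 1) → ℕ) :
    ∑ t : Fin (r + 1), (-1 : R) ^ (r - t.1) *
        (Dminus c m (List.ofFn x ++ [a t]) * Dminus c m ((List.ofFn a).eraseIdx t.1))
      = Dminus c m (List.ofFn x) * Dminus c m (List.ofFn a) := by
  set A := dminusMatrix c m a
  set N := dminusMatrix c m (Fin.snoc x 0 : Fin (r + 1) → ℕ)
  have hterm : ∀ t : Fin (r + 1), (-1 : R) ^ (r - t.1) *
      (Dminus c m (List.ofFn x ++ [a t]) * Dminus c m ((List.ofFn a).eraseIdx t.1)) =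
        A.adjugate t (Fin.last r) * (N.updateCol (Fin.last r) fun u => A u t).det := by
    intro t
    rw [mul_comm (Dminus c m _), ← mul_assoc, List.ofFn_append_singleton, List.eraseIdx_ofFn,
      Dminus_ofFn, Dminus_ofFn, Matrix.adjugate_apply_last, ← Fin.update_snoc_last (x := 0),
      dminusMatrix_update]
    rfl
  rw [Finset.sum_congr rfl fun t _ => hterm t, Matrix.sum_adjugate_mul_det_updateCol,
    Matrix.adjugate_last_last, Dminus_ofFn, Dminus_ofFn, mul_comm]
  congr 2
  ext u v
  simp [N, dminusMatrix]

end

theorem statement7_general {R : Type*} [CommRing R] (c : ℕ → ℕ → R) (m s : ℕ)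
    (hs : 2 ≤ s)
    (x : Fin (s - 1) → ℕ) (a : Fin s → ℕ) :
    ∑ t : Fin s, (-1 : R) ^ (s - 1 - t.1) *
        (Dminus c m (List.ofFn x ++ [a t]) * Dminus c m ((List.ofFn a).eraseIdx t.1))
      = Dminus c m (List.ofFn x) * Dminus c m (List.ofFn a) := by
  obtain ⟨r, rfl⟩ : ∃ r, s = r + 1 := ⟨s - 1, by omega⟩
  exact sum_neg_one_pow_mul_Dminus_mul_Dminus c m x a

/-- `Σ_{t=1}^{s} (−1)^{s−t} D⁻(x₁,…,x_{s−1},a_t)·D⁻(a₁,…,⟨a_t⟩,…,a_s)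
  = D⁻(x₁,…,x_{s−1})·D⁻(a₁,…,a_s)`. -/
theorem statement7 {R : Type*} [CommRing R] (c : ℕ → ℕ → R) (m n s : ℕ)
    (hs : 2 ≤ s) (hsn : s ≤ n)
    (x : Fin (s - 1) → ℕ) (a : Fin s → ℕ)
    (hx : ∀ t, m + 1 ≤ x t ∧ x t ≤ m + n) (ha : ∀ t, m + 1 ≤ a t ∧ a t ≤ m + n) :
    ∑ t : Fin s, (-1 : R) ^ (s - 1 - t.1) *
        (Dminus c m (List.ofFn x ++ [a t]) * Dminus c m ((List.ofFn a).eraseIdx t.1))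
      = Dminus c m (List.ofFn x) * Dminus c m (List.ofFn a) :=
  statement7_general c m s hs x a
end
end

section
/- If T⁺ is semistandard, then in every row of T⁻ = Rp(T⁺) the entries strictly decrease from left to right; equivalently, for every i and j, if the j-th and the (j+1)-st occurrences of the symbol m+i in w(T⁺) lie in columns c and c′ of T⁺ respectively, then c > c′. -/
/-! The cells of a semistandard skew tableau `T` holding a fixed symbol `v` form a horizontal
strip: if `x` lies in an earlier row than `x'` and `x.2 ≤ x'.2`, then `(x.1, x'.2)` is a cell
and `v ≤ T (x.1, x'.2) < T x' = v`. So the reading word, which scans the rows right to left and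
top to bottom, meets the occurrences of `v` in strictly decreasing columns. As `Rp` writes the
column of the `j`-th occurrence of `m+i` at position `ωᵢ + j` of row `i` of `T⁻`, the rows
of `T⁻` strictly decrease. -/

noncomputable section

/-- A partition, written 1-based: `α i` is the length of row `i` for `i ≥ 1`
(we normalize `α 0 = 0`); it is weakly decreasing and eventually zero. -/
def IsPartition (α : ℕ → ℕ) : Prop :=
  α 0 = 0 ∧ (∀ i j, 1 ≤ i → i ≤ j → α j ≤ α i) ∧ ∃ N, ∀ i, N ≤ i → α i = 0

/-- The set of cells of the skew diagram `α/β` (rows and columns 1-based):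
`(i,j)` with `β i < j ≤ α i`. -/
def cellOf (α β : ℕ → ℕ) : Set (ℕ × ℕ) := {p | β p.1 < p.2 ∧ p.2 ≤ α p.1}

/-- The conjugate partition (1-based): `(conjP α) j = #{i ≥ 1 | α i ≥ j}` for `j ≥ 1`. -/
def conjP (α : ℕ → ℕ) (j : ℕ) : ℕ := Set.ncard {i : ℕ | 1 ≤ i ∧ 1 ≤ j ∧ j ≤ α i}

/-- Semistandard skew tableau: entries weakly increase along rows (left to right) and
strictly increase down columns. -/
def IsSSkew (α β : ℕ → ℕ) (T : ℕ × ℕ → ℕ) : Prop :=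
  (∀ i j j', (i, j) ∈ cellOf α β → (i, j') ∈ cellOf α β → j ≤ j' → T (i, j) ≤ T (i, j')) ∧
  (∀ i i' j, (i, j) ∈ cellOf α β → (i', j) ∈ cellOf α β → i < i' → T (i, j) < T (i', j))

/-- Anti-semistandard skew tableau: entries strictly decrease along rows (left to right)
and weakly decrease down columns. -/
def IsAntiSSkew (α β : ℕ → ℕ) (T : ℕ × ℕ → ℕ) : Prop :=
  (∀ i j j', (i, j) ∈ cellOf α β → (i, j') ∈ cellOf α β → j < j' → T (i, j') < T (i, j)) ∧
  (∀ i i' j, (i, j) ∈ cellOf α β → (i', j) ∈ cellOf α β → i ≤ i' → T (i', j) ≤ T (i, j))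

/-- `wle p q` : cell `p` comes weakly before cell `q` in the reading order of the reading
word (rows top to bottom, inside each row right to left). -/
def wle (p q : ℕ × ℕ) : Prop := p.1 < q.1 ∨ (p.1 = q.1 ∧ q.2 ≤ p.2)

/-- Number of occurrences of the symbol `v` among the cells weakly before `x` in the
reading word of `T` (so "the `j`-th occurrence of `v` in `w(T)` is at the cell `x`" reads
`x ∈ cellOf α β ∧ T x = v ∧ occBefore α β T v x = j`). -/
def occBefore (α β : ℕ → ℕ) (T : ℕ × ℕ → ℕ) (v : ℕ) (x : ℕ × ℕ) : ℕ :=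
  Set.ncard {p | p ∈ cellOf α β ∧ wle p x ∧ T p = v}

/-- Total number of occurrences of the symbol `v` in the skew tableau `T`. -/
def occCount (α β : ℕ → ℕ) (T : ℕ × ℕ → ℕ) (v : ℕ) : ℕ :=
  Set.ncard {p | p ∈ cellOf α β ∧ T p = v}

/-- The reading word of `T` is a lattice word for the symbols `base, base+1, …` :
in every initial segment, `v+1` occurs at most as often as `v`, for every `v ≥ base`. -/
def IsLatticeFrom (α β : ℕ → ℕ) (T : ℕ × ℕ → ℕ) (base : ℕ) : Prop :=
  ∀ x ∈ cellOf α β, ∀ v, base ≤ v → occBefore α β T (v + 1) x ≤ occBefore α β T v x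

/-- `T` (with symbols `m+1, m+2, …`) is shifted Yamanouchi with respect to the shift `ω`:
for every initial segment `w′` of the reading word and every `i ≥ 1`,
`ω i + a_i(w′) ≥ ω (i+1) + a_{i+1}(w′)`. -/
def ShiftedYam (α β : ℕ → ℕ) (m : ℕ) (ω : ℕ → ℕ) (T : ℕ × ℕ → ℕ) : Prop :=
  ∀ x ∈ cellOf α β, ∀ i, 1 ≤ i →
    ω (i + 1) + occBefore α β T (m + i + 1) x ≤ ω i + occBefore α β T (m + i) x

/-- `Tm = Rp(Tp)` : if the `j`-th occurrence of the symbol `m+i` in the reading word of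
`Tp` lies in column `c` of `Tp`, then the entry of `Tm` at the cell `(i, ω i + j)` is `c`. -/
def IsRp (α β : ℕ → ℕ) (m : ℕ) (ω : ℕ → ℕ) (Tp Tm : ℕ × ℕ → ℕ) : Prop :=
  ∀ x ∈ cellOf α β, ∀ i, 1 ≤ i → Tp x = m + i →
    Tm (i, ω i + occBefore α β Tp (m + i) x) = x.2

/-- `λ⁺` : the first `m` rows of `λ`. -/
def lamPlus (m : ℕ) (la : ℕ → ℕ) : ℕ → ℕ := fun i => if i ≤ m then la i else 0

/-- `λ⁻` : the conjugate of the partition `(λ_{m+1}, λ_{m+2}, …)`. -/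
def lamMinus (m : ℕ) (la : ℕ → ℕ) : ℕ → ℕ :=
  conjP (fun i => if 1 ≤ i then la (m + i) else 0)

namespace IsPartition

variable {α : ℕ → ℕ}

lemma le_one (hα : IsPartition α) (i : ℕ) : α i ≤ α 1 := by
  rcases Nat.eq_zero_or_pos i with rfl | hi
  · rw [hα.1]; exact Nat.zero_le _
  · exact hα.2.1 1 i le_rfl hi

lemma lamPlus (hα : IsPartition α) (m : ℕ) : IsPartition (lamPlus m α) := by
  obtain ⟨h0, hanti, -⟩ := hα
  refine ⟨by simp [_root_.lamPlus, h0], fun i j hi hij => ?_, m + 1, fun i hi => ?_⟩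
  · unfold _root_.lamPlus
    split_ifs <;> first | omega | exact hanti i j hi hij
  · simp only [_root_.lamPlus, ite_eq_right_iff]
    omega

lemma conjP (hα : IsPartition α) : IsPartition (conjP α) := by
  obtain ⟨N, hN⟩ := hα.2.2
  have hfin : ∀ i, 1 ≤ i → {r | 1 ≤ r ∧ 1 ≤ i ∧ i ≤ α r}.Finite := fun i hi =>
    (Set.finite_lt_nat N).subset fun r hr => by
      by_contra hr'
      have := hN r (not_lt.mp hr')
      exact absurd hr.2.2 (by omega)
  refine ⟨by simp [_root_.conjP], fun i j hi hij => ?_, α 1 + 1, fun j hj => ?_⟩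
  · exact Set.ncard_le_ncard (fun r ⟨h1, _, h3⟩ => ⟨h1, hi, hij.trans h3⟩) (hfin i hi)
  · have hempty : {r | 1 ≤ r ∧ 1 ≤ j ∧ j ≤ α r} = ∅ :=
      Set.eq_empty_of_forall_notMem fun r hr => absurd (hr.2.2.trans (hα.le_one r)) (by omega)
    rw [_root_.conjP, hempty, Set.ncard_empty]

lemma cellOf_finite (hα : IsPartition α) (β : ℕ → ℕ) : (cellOf α β).Finite := by
  obtain ⟨N, hN⟩ := hα.2.2
  refine (Set.finite_Iic (N, α 1)).subset fun p ⟨h1, h2⟩ => Prod.le_def.mpr ⟨?_, ?_⟩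
  · by_contra hp
    have := hN p.1 (by omega)
    omega
  · exact h2.trans (hα.le_one p.1)

end IsPartition

lemma wle_trans {p q r : ℕ × ℕ} (h1 : wle p q) (h2 : wle q r) : wle p r := by
  unfold wle at *; omega

lemma wle_total (p q : ℕ × ℕ) : wle p q ∨ wle q p := by
  unfold wle; omega

def readKey (p : ℕ × ℕ) : Lex (ℕ × ℕᵒᵈ) := toLex (p.1, OrderDual.toDual p.2)

lemma readKey_le_readKey {p q : ℕ × ℕ} : readKey p ≤ readKey q ↔ wle p q := by
  simp [readKey, Prod.Lex.le_iff, wle]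

lemma readKey_injective : Function.Injective readKey := fun p q h => by
  simpa [readKey, Prod.ext_iff] using h

lemma Finset.exists_card_filter_le_eq {L : Type*} [LinearOrder L] (t : Finset L) {j : ℕ}
    (h1 : 1 ≤ j) (h2 : j ≤ t.card) : ∃ q ∈ t, (t.filter (· ≤ q)).card = j := by
  obtain ⟨k, rfl⟩ : ∃ k, j = k + 1 := ⟨j - 1, by omega⟩
  set e := t.orderEmbOfFin rfl
  refine ⟨e ⟨k, by omega⟩, t.orderEmbOfFin_mem rfl _, ?_⟩
  have ht : t = Finset.univ.map e.toEmbedding := (t.map_orderEmbOfFin_univ rfl).symm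
  calc (t.filter (· ≤ e ⟨k, by omega⟩)).card
      = ((Finset.univ.map e.toEmbedding).filter (· ≤ e ⟨k, by omega⟩)).card := by rw [← ht]
    _ = k + 1 := by simp [Finset.filter_map, Finset.filter_ge_eq_Iic]

section Occurrences

variable {α β : ℕ → ℕ} {T : ℕ × ℕ → ℕ} {v : ℕ}

lemma occBefore_mono (hfin : (cellOf α β).Finite) {y y' : ℕ × ℕ} (h : wle y y') :
    occBefore α β T v y ≤ occBefore α β T v y' :=
  Set.ncard_le_ncard (fun _ hp => ⟨hp.1, wle_trans hp.2.1 h, hp.2.2⟩)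
    (hfin.subset fun _ hp => hp.1)

lemma wle_of_occBefore_lt (hfin : (cellOf α β).Finite) {x x' : ℕ × ℕ}
    (h : occBefore α β T v x < occBefore α β T v x') : wle x x' ∧ x ≠ x' := by
  refine ⟨(wle_total x x').resolve_right fun hw => ?_, by rintro rfl; exact h.false⟩
  exact absurd (occBefore_mono (T := T) (v := v) hfin hw) h.not_ge

lemma exists_occBefore_eq (hfin : (cellOf α β).Finite) {j : ℕ} (h1 : 1 ≤ j)
    (h2 : j ≤ occCount α β T v) : ∃ x ∈ cellOf α β, T x = v ∧ occBefore α β T v x = j := by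
  classical
  have hS : {p | p ∈ cellOf α β ∧ T p = v}.Finite := hfin.subset fun p hp => hp.1
  have hcard : hS.toFinset.card = occCount α β T v := by
    rw [occCount, ← Set.ncard_coe_finset, hS.coe_toFinset]
  obtain ⟨_, hq, hrank⟩ := (hS.toFinset.image readKey).exists_card_filter_le_eq h1
    (by rwa [Finset.card_image_of_injective _ readKey_injective, hcard])
  obtain ⟨x, hxS, rfl⟩ := Finset.mem_image.mp hq
  obtain ⟨hx, hTx⟩ := hS.mem_toFinset.mp hxS
  have hocc : {p | p ∈ cellOf α β ∧ wle p x ∧ T p = v} = ↑(hS.toFinset.filter (wle · x)) := by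
    ext p
    simp only [Finset.coe_filter, Set.mem_ofPred_eq, Set.Finite.mem_toFinset]
    tauto
  refine ⟨x, hx, hTx, ?_⟩
  rw [occBefore, hocc, Set.ncard_coe_finset, ← hrank, Finset.filter_image,
    Finset.card_image_of_injective _ readKey_injective]
  simp only [readKey_le_readKey]

lemma IsSSkew.col_lt_of_wle (hα : IsPartition α) (hT : IsSSkew α β T) {x x' : ℕ × ℕ}
    (hx : x ∈ cellOf α β) (hx' : x' ∈ cellOf α β) (hTxx' : T x = T x') (hw : wle x x')
    (hne : x ≠ x') : x'.2 < x.2 := by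
  obtain ⟨hβx, hαx⟩ := hx
  rcases hw with hrow | ⟨hrow, hcol⟩
  · by_contra! hcol
    have hx1 : 1 ≤ x.1 := Nat.one_le_iff_ne_zero.mpr fun h0 => by
      rw [h0, hα.1] at hαx; omega
    have hcorner : (x.1, x'.2) ∈ cellOf α β :=
      ⟨hβx.trans_le hcol, hx'.2.trans (hα.2.1 x.1 x'.1 hx1 hrow.le)⟩
    have hle := hT.1 x.1 x.2 x'.2 ⟨hβx, hαx⟩ hcorner hcol
    have hlt := hT.2 x.1 x'.1 x'.2 hcorner hx' hrow
    simp only [Prod.mk.eta] at hle hlt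
    omega
  · exact hcol.lt_of_ne fun h => hne (Prod.ext hrow h.symm)

lemma IsSSkew.col_lt_of_occBefore_lt (hα : IsPartition α) (hT : IsSSkew α β T)
    {x x' : ℕ × ℕ} (hx : x ∈ cellOf α β) (hx' : x' ∈ cellOf α β) (hTx : T x = v)
    (hTx' : T x' = v) (h : occBefore α β T v x < occBefore α β T v x') : x'.2 < x.2 :=
  let ⟨hw, hne⟩ := wle_of_occBefore_lt (hα.cellOf_finite β) h
  hT.col_lt_of_wle hα hx hx' (hTx.trans hTx'.symm) hw hne

end Occurrences

theorem statement11_general (m : ℕ) (la μ ν : ℕ → ℕ)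
    (hla : IsPartition la)
    (hν : IsPartition ν)
    (Tp : ℕ × ℕ → ℕ)
    (hcont : ∀ i, 1 ≤ i →
      occCount (conjP (lamPlus m la)) (conjP μ) Tp (m + i) = ν i - lamMinus m la i)
    (hss : IsSSkew (conjP (lamPlus m la)) (conjP μ) Tp)
    (Tm : ℕ × ℕ → ℕ)
    (hRp : IsRp (conjP (lamPlus m la)) (conjP μ) m (lamMinus m la) Tp Tm) :
    (∀ i c c', (i, c) ∈ cellOf ν (lamMinus m la) → (i, c') ∈ cellOf ν (lamMinus m la) →
        c < c' → Tm (i, c') < Tm (i, c)) ∧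
      ∀ i, 1 ≤ i → ∀ x x', x ∈ cellOf (conjP (lamPlus m la)) (conjP μ) →
        x' ∈ cellOf (conjP (lamPlus m la)) (conjP μ) →
        Tp x = m + i → Tp x' = m + i →
        occBefore (conjP (lamPlus m la)) (conjP μ) Tp (m + i) x' =
          occBefore (conjP (lamPlus m la)) (conjP μ) Tp (m + i) x + 1 →
        x'.2 < x.2 := by
  have hα : IsPartition (conjP (lamPlus m la)) := (hla.lamPlus m).conjP
  have hfin := hα.cellOf_finite (conjP μ)
  refine ⟨fun i c c' hc hc' hcc' => ?_,
    fun i _ x x' hx hx' hTx hTx' hsucc => hss.col_lt_of_occBefore_lt hα hx hx' hTx hTx' (by omega)⟩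
  obtain ⟨hωc, hcν⟩ : lamMinus m la i < c ∧ c ≤ ν i := hc
  obtain ⟨hωc', hc'ν⟩ : lamMinus m la i < c' ∧ c' ≤ ν i := hc'
  have hi : 1 ≤ i := Nat.one_le_iff_ne_zero.mpr fun h0 => by
    simp only [h0, hν.1] at hcν; omega
  obtain ⟨x, hx, hTx, hocc⟩ := exists_occBefore_eq (T := Tp) (v := m + i) hfin
    (j := c - lamMinus m la i) (by omega) (by rw [hcont i hi]; omega)
  obtain ⟨x', hx', hTx', hocc'⟩ := exists_occBefore_eq (T := Tp) (v := m + i) hfin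
    (j := c' - lamMinus m la i) (by omega) (by rw [hcont i hi]; omega)
  have hTmc := hRp x hx i hi hTx
  have hTmc' := hRp x' hx' i hi hTx'
  rw [hocc, Nat.add_sub_cancel' hωc.le] at hTmc
  rw [hocc', Nat.add_sub_cancel' hωc'.le] at hTmc'
  rw [hTmc, hTmc']
  exact hss.col_lt_of_occBefore_lt hα hx hx' hTx hTx' (by omega)

/-- if `T⁺` is semistandard then in every row of `T⁻ = Rp(T⁺)` the entries
strictly decrease from left to right; equivalently, consecutive occurrences of a symbol
`m+i` in the reading word of `T⁺` lie in strictly decreasing columns. -/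
theorem statement11 (m n : ℕ) (hm : 1 ≤ m) (hn : 1 ≤ n) (la μ ν : ℕ → ℕ)
    (hla : IsPartition la) (hook : la (m + 1) ≤ n)
    (hμ : IsPartition μ) (hμl : ∀ i, μ i ≤ lamPlus m la i)
    (hν : IsPartition ν) (hνω : ∀ i, lamMinus m la i ≤ ν i)
    (Tp : ℕ × ℕ → ℕ)
    (hrange : ∀ p ∈ cellOf (conjP (lamPlus m la)) (conjP μ),
      m + 1 ≤ Tp p ∧ Tp p ≤ m + n)
    (hcont : ∀ i, 1 ≤ i →
      occCount (conjP (lamPlus m la)) (conjP μ) Tp (m + i) = ν i - lamMinus m la i)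
    (hss : IsSSkew (conjP (lamPlus m la)) (conjP μ) Tp)
    (Tm : ℕ × ℕ → ℕ)
    (hRp : IsRp (conjP (lamPlus m la)) (conjP μ) m (lamMinus m la) Tp Tm) :
    (∀ i c c', (i, c) ∈ cellOf ν (lamMinus m la) → (i, c') ∈ cellOf ν (lamMinus m la) →
        c < c' → Tm (i, c') < Tm (i, c)) ∧
      ∀ i, 1 ≤ i → ∀ x x', x ∈ cellOf (conjP (lamPlus m la)) (conjP μ) →
        x' ∈ cellOf (conjP (lamPlus m la)) (conjP μ) →
        Tp x = m + i → Tp x' = m + i →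
        occBefore (conjP (lamPlus m la)) (conjP μ) Tp (m + i) x' =
          occBefore (conjP (lamPlus m la)) (conjP μ) Tp (m + i) x + 1 →
        x'.2 < x.2 :=
  statement11_general m la μ ν hla hν Tp hcont hss Tm hRp
end
end
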